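/- Let F be a field of characteristic not 2, a ∈ F^×, and let s: F_a → F be a nonzero F-linear map with s(1) = 0. Let π, μ ∈ F_a^× and let q = ⟨π, μ, −πμ⟩ be the 3-dimensional quadratic form over F_a. If the 6-dimensional transfer form s_*(q) over F is hyperbolic and ⟨μ, −πμ⟩ is anisotropic over F_a, then ⟨μ, −πμ⟩ represents some element y of F^× over F_a. -/

import Mathlib

open Polynomial Quaternion TensorProduct

/-- The quadratic étale algebra `F_a = F[x]/(x² - a)`. -/
noncomputable abbrev quadAlg (F : Type) [Field F] (a : F) : Type :=
  AdjoinRoot (X ^ 2 - C a)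

/-- The étale algebra `F_{a,d} = (F_a)_d`. -/
noncomputable abbrev quadAlg2 (F : Type) [Field F] (a d : F) : Type :=
  AdjoinRoot (X ^ 2 - C (algebraMap F (quadAlg F a) d))

/-- The class of the quaternion algebra `(α, β)` is trivial in the Brauer group of `K`. -/
def QSplit (K : Type) [CommRing K] (α β : K) : Prop :=
  Nonempty (ℍ[K, α, β] ≃ₐ[K] Matrix (Fin 2) (Fin 2) K)

/-- The canonical map `F_d → F_{a,d}`. -/
noncomputable def toQ2 (F : Type) [Field F] (a d : F) :
    quadAlg F d →ₐ[F] quadAlg2 F a d :=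
  AdjoinRoot.liftAlgHom _ (Algebra.ofId _ _) (AdjoinRoot.root _) (by
    show aeval (R := F) (A := quadAlg2 F a d) (AdjoinRoot.root _) (X ^ 2 - C d : F[X]) = 0
    have h := AdjoinRoot.eval₂_root (X ^ 2 - C ((algebraMap F (quadAlg F a)) d))
    simp only [eval₂_sub, eval₂_pow, eval₂_X, eval₂_C] at h
    simp only [map_sub, map_pow, aeval_X, aeval_C]
    rw [IsScalarTower.algebraMap_apply F (quadAlg F a) (quadAlg2 F a d)]
    exact h)

/-- The hyperbolic plane `⟨x, y⟩ ↦ xy` over `F`. -/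
noncomputable def hypPlane (F : Type) [Field F] : QuadraticForm F (F × F) :=
  QuadraticMap.linMulLin (LinearMap.fst F F F) (LinearMap.snd F F F)

/-- The orthogonal sum of three hyperbolic planes: the 6-dimensional hyperbolic form. -/
noncomputable def hyp6 (F : Type) [Field F] :
    QuadraticForm F (((F × F) × (F × F)) × (F × F)) :=
  ((hypPlane F).prod (hypPlane F)).prod (hypPlane F)

/-- The Scharlau transfer `s_*(q)` of a quadratic form `q` over `K` along an `F`-linear
functional `s : K → F`. -/
noncomputable def transferForm (F : Type) [Field F] (K : Type) [CommRing K] [Algebra F K]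
    (V : Type) [AddCommGroup V] [Module K V] [Module F V] [IsScalarTower F K V]
    (s : K →ₗ[F] F) (q : QuadraticForm K V) : QuadraticForm F V where
  toFun x := s (q x)
  toFun_smul c x := by
    show s (q (c • x)) = (c * c) • s (q x)
    rw [algebra_compatible_smul K c x, QuadraticMap.map_smul, ← map_mul, algebraMap_smul,
      map_smul]
  exists_companion' := by
    obtain ⟨B, hB⟩ := q.exists_companion
    refine ⟨LinearMap.mk₂ F (fun x y => s (B x y)) (fun x x' y => ?_) (fun c x y => ?_)
      (fun x y y' => ?_) (fun c x y => ?_), fun x y => by simp [hB, map_add]⟩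
    · show s (B (x + x') y) = s (B x y) + s (B x' y)
      rw [map_add, LinearMap.add_apply, map_add]
    · show s (B (c • x) y) = c • s (B x y)
      rw [algebra_compatible_smul K c x, map_smul, LinearMap.smul_apply, algebraMap_smul,
        map_smul]
    · show s (B x (y + y')) = s (B x y) + s (B x y')
      rw [map_add, map_add]
    · show s (B x (c • y)) = c • s (B x y)
      rw [algebra_compatible_smul K c y, map_smul, algebraMap_smul, map_smul]


section stmt14aux

variable (F : Type) [Field F]

lemma quadAlg_fd (a : F) : FiniteDimensional F (quadAlg F a) :=
  (AdjoinRoot.powerBasis' (monic_X_pow_sub_C a two_ne_zero)).finite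

lemma quadAlg_finrank (a : F) : Module.finrank F (quadAlg F a) = 2 := by
  have := quadAlg_fd F a
  rw [(AdjoinRoot.powerBasis' (monic_X_pow_sub_C a two_ne_zero)).finrank]
  simp [AdjoinRoot.powerBasis', natDegree_X_pow_sub_C]

lemma ker_eq_span (a : F) (s : quadAlg F a →ₗ[F] F) (hs : s ≠ 0) (hs1 : s 1 = 0) :
    ∀ c : quadAlg F a, s c = 0 → ∃ y : F, algebraMap F (quadAlg F a) y = c := by
  have hfd := quadAlg_fd F a
  have hnt : Nontrivial (quadAlg F a) :=
    Module.nontrivial_of_finrank_pos (R := F) (by rw [quadAlg_finrank]; norm_num)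
  have hone : (1 : quadAlg F a) ≠ 0 := one_ne_zero
  have hrange : LinearMap.range s = ⊤ := by
    obtain ⟨x, hx⟩ : ∃ x, s x ≠ 0 := by
      by_contra h
      push_neg at h
      exact hs (LinearMap.ext fun x => h x)
    rw [Submodule.eq_top_iff']
    intro c
    exact ⟨(c / s x) • x, by simp [div_mul_cancel₀, hx]⟩
  have hker : Module.finrank F (LinearMap.ker s) = 1 := by
    have h := LinearMap.finrank_range_add_finrank_ker s
    rw [hrange, finrank_top, Module.finrank_self, quadAlg_finrank] at h
    omega
  have hspan : (Submodule.span F {(1 : quadAlg F a)}) ≤ LinearMap.ker s := by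
    rw [Submodule.span_le]
    rintro x rfl
    · exact hs1
  have heq : (Submodule.span F {(1 : quadAlg F a)}) = LinearMap.ker s := by
    apply Submodule.eq_of_le_of_finrank_le hspan
    rw [hker, finrank_span_singleton hone]
  intro c hc
  have : c ∈ Submodule.span F {(1 : quadAlg F a)} := heq ▸ hc
  obtain ⟨y, hy⟩ := Submodule.mem_span_singleton.mp this
  exact ⟨y, by rw [← hy, Algebra.algebraMap_eq_smul_one]⟩

abbrev hypSpace (F : Type) [Field F] := ((F × F) × (F × F)) × (F × F)

/-- A totally isotropic 3-dimensional subspace of the 6-dimensional hyperbolic space. -/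
noncomputable def isoSub : Submodule F (hypSpace F) :=
  LinearMap.range (((LinearMap.inl F F F).prodMap (LinearMap.inl F F F)).prodMap
    (LinearMap.inl F F F))

lemma finrank_hypSpace : Module.finrank F (hypSpace F) = 6 := by
  simp [Module.finrank_prod, Module.finrank_self]

lemma finrank_isoSub : Module.finrank F (isoSub F) = 3 := by
  have hinj : Function.Injective (((LinearMap.inl F F F).prodMap
      (LinearMap.inl F F F)).prodMap (LinearMap.inl F F F)) := by
    rw [LinearMap.coe_prodMap, LinearMap.coe_prodMap]
    exact (LinearMap.inl_injective.prodMap LinearMap.inl_injective).prodMap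
      LinearMap.inl_injective
  rw [isoSub, LinearMap.finrank_range_of_inj hinj]
  simp [Module.finrank_prod, Module.finrank_self]

lemma isoSub_isotropic {u : hypSpace F} (hu : u ∈ isoSub F) : hyp6 F u = 0 := by
  obtain ⟨⟨⟨x, y⟩, z⟩, rfl⟩ := hu
  simp [hyp6, hypPlane, QuadraticMap.prod_apply, QuadraticMap.linMulLin_apply]

end stmt14aux

/-- Let `s : F_a → F` be a nonzero `F`-linear map with `s(1) = 0`, and let
`q = ⟨π, μ, -πμ⟩` over `F_a`. If the transfer `s_*(q)` is hyperbolic and `⟨μ, -πμ⟩` is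
anisotropic over `F_a`, then `⟨μ, -πμ⟩` represents an element of `F^×`. -/
theorem stmt14 (F : Type) [Field F] (hchar : (2 : F) ≠ 0) (a : F) (ha : a ≠ 0)
    (s : quadAlg F a →ₗ[F] F) (hs : s ≠ 0) (hs1 : s 1 = 0)
    (π μ : quadAlg F a) (hπ : IsUnit π) (hμ : IsUnit μ)
    (hhyp : Nonempty (QuadraticMap.IsometryEquiv
      (transferForm F (quadAlg F a) (Fin 3 → quadAlg F a) s
        (QuadraticMap.weightedSumSquares (quadAlg F a) ![π, μ, -(π * μ)]))
      (hyp6 F)))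
    (hanis : (QuadraticMap.weightedSumSquares (quadAlg F a) ![μ, -(π * μ)]).Anisotropic) :
    ∃ y : F, y ≠ 0 ∧ ∃ v : Fin 2 → quadAlg F a,
      QuadraticMap.weightedSumSquares (quadAlg F a) ![μ, -(π * μ)] v =
        algebraMap F (quadAlg F a) y := by
  classical
  obtain ⟨φ⟩ := hhyp
  have hfd : FiniteDimensional F (quadAlg F a) := quadAlg_fd F a
  -- the subspace W = {w | w 0 = 0}, of dimension 4 over F
  set f : (Fin 3 → quadAlg F a) →ₗ[F] quadAlg F a :=
    (LinearMap.proj 0 : (Fin 3 → quadAlg F a) →ₗ[quadAlg F a] quadAlg F a).restrictScalars F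
    with hf
  set W : Submodule F (Fin 3 → quadAlg F a) := LinearMap.ker f with hW
  have hfin3 : Module.finrank F (Fin 3 → quadAlg F a) = 6 := by
    rw [Module.finrank_pi_fintype, Fin.sum_univ_three, quadAlg_finrank]
  have hWrank : Module.finrank F W = 4 := by
    have h := LinearMap.finrank_range_add_finrank_ker f
    have hr : LinearMap.range f = ⊤ := by
      rw [LinearMap.range_eq_top]
      intro c
      exact ⟨fun _ => c, rfl⟩
    rw [hr, finrank_top, quadAlg_finrank, hfin3, ← hW] at h
    omega
  set U : Submodule F (hypSpace F) :=
    W.map (φ.toLinearEquiv : (Fin 3 → quadAlg F a) →ₗ[F] hypSpace F) with hU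
  have hUrank : Module.finrank F U = 4 := by
    rw [hU, LinearEquiv.finrank_map_eq, hWrank]
  -- dimension count : U ⊓ isoSub ≠ 0
  have hsum : Module.finrank F ↥(U ⊔ isoSub F) + Module.finrank F ↥(U ⊓ isoSub F) = 7 := by
    rw [Submodule.finrank_sup_add_finrank_inf_eq, hUrank, finrank_isoSub]
  have hle : Module.finrank F ↥(U ⊔ isoSub F) ≤ 6 := by
    have := Submodule.finrank_le (U ⊔ isoSub F)
    rwa [finrank_hypSpace] at this
  have hpos : 0 < Module.finrank F ↥(U ⊓ isoSub F) := by omega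
  have : Nontrivial ↥(U ⊓ isoSub F) := Module.nontrivial_of_finrank_pos (R := F) hpos
  obtain ⟨x, hx⟩ := exists_ne (0 : ↥(U ⊓ isoSub F))
  have hu0 : (x : hypSpace F) ≠ 0 := fun h => hx (Subtype.ext h)
  have huU : (x : hypSpace F) ∈ U := (Submodule.mem_inf.mp x.2).1
  have huL : (x : hypSpace F) ∈ isoSub F := (Submodule.mem_inf.mp x.2).2
  obtain ⟨w, hwW, hwu⟩ := Submodule.mem_map.mp huU
  have hw0 : w 0 = 0 := LinearMap.mem_ker.mp hwW
  -- s (Q w) = 0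
  have hsQ : s (QuadraticMap.weightedSumSquares (quadAlg F a) ![π, μ, -(π * μ)] w) = 0 := by
    have h1 := φ.map_app w
    have h3 : (φ : (Fin 3 → quadAlg F a) → hypSpace F) w = (x : hypSpace F) := by
      rw [← hwu]; rfl
    rw [h3, isoSub_isotropic F huL] at h1
    exact h1.symm
  set v : Fin 2 → quadAlg F a := ![w 1, w 2] with hv
  have hvQ : QuadraticMap.weightedSumSquares (quadAlg F a) ![μ, -(π * μ)] v =
      QuadraticMap.weightedSumSquares (quadAlg F a) ![π, μ, -(π * μ)] w := by
    rw [QuadraticMap.weightedSumSquares_apply, QuadraticMap.weightedSumSquares_apply,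
      Fin.sum_univ_three, Fin.sum_univ_two, hw0]
    simp [hv]
  have hcne : QuadraticMap.weightedSumSquares (quadAlg F a) ![π, μ, -(π * μ)] w ≠ 0 := by
    intro h
    have hv0 : v = 0 := hanis v (by rw [hvQ, h])
    have hw' : w = 0 := by
      funext i
      fin_cases i
      · exact hw0
      · simpa [hv] using congrFun hv0 0
      · simpa [hv] using congrFun hv0 1
    apply hu0
    rw [← hwu, hw', map_zero]
  obtain ⟨y, hy⟩ := ker_eq_span F a s hs hs1 _ hsQ
  refine ⟨y, ?_, v, by rw [hvQ, hy]⟩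
  intro h
  rw [h, map_zero] at hy
  exact hcne hy.symm
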